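/- Let p be an odd prime and F a field of characteristic p containing F_{p^2}. Suppose u ∈ F satisfies u^p + u ≠ 0 and that u ∈ F_{p^2} \ K_-. Then for every α ∈ K_-, the polynomial X^p + X - (u+α)^{p+1}/(u^p + u) splits into p distinct linear factors over F_{p^2}, and every root lies in F_{p^2} \ K_-. -/

import Mathlib

open Polynomial
open scoped Classical

/-!
Put `c = (u + α)^(p+1) / (u^p + u)`. Over `𝔽_{p²}` the Frobenius `x ↦ x^p` is an involution, so
`x^(p+1)` and `x^p + x` are fixed by it, hence so is `c`. For such `c` the polynomial
`f = X^p + X - c` satisfies `f^p - f = X^(p²) - X`, so `f` divides `X^(p²) - X` and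
splits over `𝔽_{p²}`; its derivative is `1`, so its `p` roots are distinct. Finally `c ≠ 0`
because `u + α ≠ 0`, so no root `η` can have `η^p + η = 0`.
-/

section CharP

variable {R : Type*} [CommRing R] {p : ℕ}

theorem natDegree_X_pow_add_X_sub_C [Nontrivial R] (hp : 1 < p) (c : R) :
    (X ^ p + X - C c : R[X]).natDegree = p := by
  rw [add_sub_assoc]
  compute_degree!
  · simp only [if_neg hp.ne, if_neg (by omega : p ≠ 0)]
    norm_num
  · omega

theorem derivative_X_pow_add_X_sub_C [CharP R p] (c : R) :
    derivative (X ^ p + X - C c : R[X]) = 1 := by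
  simp only [derivative_sub, derivative_add, derivative_X_pow, derivative_X, derivative_C,
    CharP.cast_eq_zero R p]
  simp

theorem separable_X_pow_add_X_sub_C [CharP R p] (c : R) : (X ^ p + X - C c : R[X]).Separable := by
  rw [Separable, derivative_X_pow_add_X_sub_C]
  exact isCoprime_one_right

variable [Fact p.Prime] [CharP R p]

theorem X_pow_add_X_sub_C_dvd_X_pow_sq_sub_X {c : R} (hc : c ^ p = c) :
    (X ^ p + X - C c : R[X]) ∣ X ^ p ^ 2 - X := by
  set f : R[X] := X ^ p + X - C c
  have hfp : f ^ p - f = X ^ p ^ 2 - X := by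
    simp only [f, sub_pow_char, add_pow_char, ← C_pow, hc, ← pow_mul, ← sq]
    ring
  rw [← hfp]
  exact ⟨f ^ (p - 1) - 1, by rw [mul_sub, mul_one, ← pow_succ', Nat.sub_add_cancel
    (Fact.out : p.Prime).one_le]⟩

theorem add_ne_zero_of_pow_char_add_self_ne_zero {u α : R} (hu : u ^ p + u ≠ 0)
    (hα : α ^ p = -α) : u + α ≠ 0 := by
  intro h
  rw [eq_neg_of_add_eq_zero_left h, ← frobenius_def, map_neg, frobenius_def, hα] at hu
  exact hu (neg_add_cancel _)

end CharP

section QuadraticFiniteField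

variable {K : Type*} [Field K] {p : ℕ}

theorem pow_char_succ_pow_char [Finite K] (hK : Nat.card K = p ^ 2) (x : K) :
    (x ^ (p + 1)) ^ p = x ^ (p + 1) := by
  have := Fintype.ofFinite K
  rw [← pow_mul, add_one_mul, pow_add, ← sq, ← hK, Nat.card_eq_fintype_card,
    FiniteField.pow_card, mul_comm, ← pow_succ]

variable [Fact p.Prime] [CharP K p]

theorem pow_char_add_self_pow_char [Finite K] (hK : Nat.card K = p ^ 2) (x : K) :
    (x ^ p + x) ^ p = x ^ p + x := by
  have := Fintype.ofFinite K
  rw [add_pow_char, ← pow_mul, ← sq, ← hK, Nat.card_eq_fintype_card, FiniteField.pow_card,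
    add_comm]

theorem splits_X_pow_add_X_sub_C (hK : Nat.card K = p ^ 2) {c : K} (hc : c ^ p = c) :
    (X ^ p + X - C c).Splits := by
  refine Splits.of_dvd ?_
    (FiniteField.X_pow_card_pow_sub_X_ne_zero K two_ne_zero (Fact.out : p.Prime).one_lt)
    (X_pow_add_X_sub_C_dvd_X_pow_sq_sub_X hc)
  rw [← hK]
  exact splits_X_pow_nat_card_sub_X

end QuadraticFiniteField

theorem stmt_16_general (p : ℕ) [Fact p.Prime]
    (u α : GaloisField p 2) (hu : u ^ p + u ≠ 0) (hα : α ^ p = -α) :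
    (X ^ p + X - C ((u + α) ^ (p + 1) / (u ^ p + u))).Splits ∧
    (X ^ p + X - C ((u + α) ^ (p + 1) / (u ^ p + u))).roots.toFinset.card = p ∧
    ∀ η : GaloisField p 2,
      (X ^ p + X - C ((u + α) ^ (p + 1) / (u ^ p + u))).IsRoot η → η ^ p + η ≠ 0 := by
  have hK : Nat.card (GaloisField p 2) = p ^ 2 := GaloisField.card p 2 two_ne_zero
  set c := (u + α) ^ (p + 1) / (u ^ p + u)
  have hc : c ^ p = c := by
    rw [div_pow, pow_char_succ_pow_char hK, pow_char_add_self_pow_char hK]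
  have hc0 : c ≠ 0 :=
    div_ne_zero (pow_ne_zero _ (add_ne_zero_of_pow_char_add_self_ne_zero hu hα)) hu
  have hsplits := splits_X_pow_add_X_sub_C hK hc
  refine ⟨hsplits, ?_, fun η hη hη0 => hc0 ?_⟩
  · rw [Multiset.toFinset_card_of_nodup (nodup_roots (separable_X_pow_add_X_sub_C c)),
      splits_iff_card_roots.mp hsplits, natDegree_X_pow_add_X_sub_C (Fact.out : p.Prime).one_lt]
  · simpa [IsRoot, hη0] using hη

/-- For `K = 𝔽_{p²}`, `u ∈ K \ K₋` (i.e. `u^p + u ≠ 0`) and `α ∈ K₋`, the polynomial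
`X^p + X - (u+α)^(p+1)/(u^p + u)` splits into `p` distinct linear factors over `K`
and every root lies in `K \ K₋`. -/
theorem stmt_16 (p : ℕ) [Fact p.Prime] (hodd : Odd p)
    (u α : GaloisField p 2) (hu : u ^ p + u ≠ 0) (hα : α ^ p = -α) :
    (X ^ p + X - C ((u + α) ^ (p + 1) / (u ^ p + u))).Splits ∧
    (X ^ p + X - C ((u + α) ^ (p + 1) / (u ^ p + u))).roots.toFinset.card = p ∧
    ∀ η : GaloisField p 2,
      (X ^ p + X - C ((u + α) ^ (p + 1) / (u ^ p + u))).IsRoot η → η ^ p + η ≠ 0 :=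
  stmt_16_general p u α hu hα
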